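/- Let p > 1, c_p = (2(p+1))^{1/(p-1)}, and Q(x) = c_p [2 cosh((p-1)x/2)]^{-2/(p-1)}. Then ∫_{-∞}^{∞} Q(x)^p e^{-x} dx = 2 c_p. -/

import Mathlib

open MeasureTheory

/-- The soliton interaction constant `c_p = (2(p+1))^{1/(p-1)}`. -/
noncomputable def cp (p : ℝ) : ℝ := (2 * (p + 1)) ^ ((1 : ℝ) / (p - 1))

/-- The explicit soliton profile `Q(x) = c_p (2 cosh((p-1)x/2))^{-2/(p-1)}`. -/
noncomputable def Q (p : ℝ) (x : ℝ) : ℝ :=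
  cp p * (2 * Real.cosh ((p - 1) * x / 2)) ^ (-(2 / (p - 1)))

/-!
With `y = (p - 1) x` one has `2 cosh (y / 2) = e^{-y/2} (1 + e^y)`, so the integrand becomes
`c_p^p e^y (1 + e^y)^{-2p/(p-1)}`. This has the explicit antiderivative
`-c_p^p (1 + e^y)^{-(p+1)/(p-1)} / (p + 1)`, with limits `-c_p^p / (p + 1)` at `-∞` and `0` at `+∞`;
being a nonnegative derivative it is automatically integrable. Hence the integral is
`c_p^p / (p + 1) = 2 c_p`, because `c_p^{p-1} = 2 (p + 1)`.
-/

open Real Filter Topology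

theorem integrable_deriv_of_nonneg {g g' : ℝ → ℝ} {m n : ℝ}
    (hderiv : ∀ x, HasDerivAt g (g' x) x) (hg' : ∀ x, 0 ≤ g' x)
    (hbot : Tendsto g atBot (𝓝 m)) (htop : Tendsto g atTop (𝓝 n)) : Integrable g' := by
  have hint : ∀ a b, IntervalIntegrable g' volume a b := fun a b =>
    intervalIntegral.intervalIntegrable_deriv_of_nonneg
      (fun x _ => (hderiv x).continuousAt.continuousWithinAt) (fun x _ => hderiv x)
      (fun x _ => hg' x)
  have hnorm : (fun i => ∫ x in -i..i, ‖g' x‖) = fun i => g i - g (-i) := by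
    ext i
    simp_rw [Real.norm_of_nonneg (hg' _)]
    exact intervalIntegral.integral_eq_sub_of_hasDerivAt (fun x _ => hderiv x) (hint _ _)
  refine integrable_of_intervalIntegral_norm_tendsto (n - m) (fun i => (hint (-i) i).1)
    tendsto_neg_atTop_atBot tendsto_id ?_
  rw [hnorm]
  exact htop.sub (hbot.comp tendsto_neg_atTop_atBot)

theorem integral_of_hasDerivAt_of_nonneg {g g' : ℝ → ℝ} {m n : ℝ}
    (hderiv : ∀ x, HasDerivAt g (g' x) x) (hg' : ∀ x, 0 ≤ g' x)
    (hbot : Tendsto g atBot (𝓝 m)) (htop : Tendsto g atTop (𝓝 n)) : ∫ x, g' x = n - m :=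
  integral_of_hasDerivAt_of_tendsto hderiv
    (integrable_deriv_of_nonneg hderiv hg' hbot htop) hbot htop

theorem hasDerivAt_one_add_exp_mul_rpow (a r x : ℝ) :
    HasDerivAt (fun y => (1 + exp (a * y)) ^ r)
      (r * a * (exp (a * x) * (1 + exp (a * x)) ^ (r - 1))) x := by
  have h := (((hasDerivAt_id' x).const_mul a).exp.const_add 1).rpow_const
    (p := r) (Or.inl (by positivity))
  convert h using 1
  ring

theorem integral_exp_mul_mul_one_add_exp_mul_rpow_neg {a r : ℝ} (ha : 0 < a) (hr : 1 < r) :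
    ∫ x, exp (a * x) * (1 + exp (a * x)) ^ (-r) = (a * (r - 1))⁻¹ := by
  have hr' : r - 1 ≠ 0 := by linarith
  have hF : ∀ x, HasDerivAt (fun y => -(a * (r - 1))⁻¹ * (1 + exp (a * y)) ^ (-(r - 1)))
      (exp (a * x) * (1 + exp (a * x)) ^ (-r)) x := fun x => by
    refine ((hasDerivAt_one_add_exp_mul_rpow a (-(r - 1)) x).const_mul _).congr_deriv ?_
    rw [show -(r - 1) - 1 = -r by ring]
    field_simp
  have hbase_top : Tendsto (fun y => 1 + exp (a * y)) atTop atTop :=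
    tendsto_atTop_add_const_left _ 1 (tendsto_exp_atTop.comp (tendsto_id.const_mul_atTop ha))
  have hbase_bot : Tendsto (fun y => 1 + exp (a * y)) atBot (𝓝 1) := by
    simpa using (tendsto_exp_atBot.comp (tendsto_id.const_mul_atBot ha)).const_add 1
  have htop := ((tendsto_rpow_neg_atTop (y := r - 1) (by linarith)).comp hbase_top).const_mul
      (-(a * (r - 1))⁻¹)
  have hbot := (hbase_bot.rpow_const (p := -(r - 1)) (Or.inl one_ne_zero)).const_mul
      (-(a * (r - 1))⁻¹)
  rw [mul_zero] at htop
  rw [one_rpow, mul_one] at hbot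
  rw [integral_of_hasDerivAt_of_nonneg hF (fun x => by positivity) hbot htop]
  ring

theorem two_mul_cosh_half (y : ℝ) : 2 * cosh (y / 2) = exp (-(y / 2)) * (1 + exp y) := by
  rw [cosh_eq, mul_add, mul_one, ← exp_add]
  ring_nf

theorem cp_pos {p : ℝ} (hp : -1 < p) : 0 < cp p :=
  rpow_pos_of_pos (by linarith) _

theorem cp_rpow_self {p : ℝ} (hp : 1 < p) : cp p ^ p = 2 * (p + 1) * cp p := by
  have h : cp p ^ (p - 1) = 2 * (p + 1) := by
    rw [cp, ← rpow_mul (by linarith), one_div_mul_cancel (by linarith), rpow_one]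
  rw [← h, ← rpow_add_one (cp_pos (by linarith)).ne', sub_add_cancel]

theorem Q_rpow_mul_exp_neg {p : ℝ} (hp : 1 < p) (x : ℝ) :
    Q p x ^ p * exp (-x) =
      cp p ^ p * (exp ((p - 1) * x) * (1 + exp ((p - 1) * x)) ^ (-(2 * p / (p - 1)))) := by
  have hp' : p - 1 ≠ 0 := by linarith
  have hcosh : 0 ≤ 2 * cosh ((p - 1) * x / 2) := by positivity
  rw [Q, mul_rpow (cp_pos (by linarith)).le (rpow_nonneg hcosh _), ← rpow_mul hcosh,
    two_mul_cosh_half, mul_rpow (exp_pos _).le (by positivity), ← exp_mul,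
    show -(2 / (p - 1)) * p = -(2 * p / (p - 1)) by ring]
  have hexp : exp (-((p - 1) * x / 2) * -(2 * p / (p - 1))) * exp (-x) = exp ((p - 1) * x) := by
    rw [← exp_add]
    congr 1
    field_simp
    ring
  rw [← hexp]
  ring

/-- The soliton-interaction integral: `∫ Q^p(x) e^{-x} dx = 2 c_p`. -/
theorem soliton_interaction_integral (p : ℝ) (hp : 1 < p) :
    (∫ x : ℝ, Q p x ^ p * Real.exp (-x)) = 2 * cp p := by
  have hp₁ : p - 1 ≠ 0 := by linarith
  have hp₂ : p + 1 ≠ 0 := by linarith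
  have hr : 1 < 2 * p / (p - 1) := by rw [lt_div_iff₀ (by linarith)]; linarith
  have hcoef : (p - 1) * (2 * p / (p - 1) - 1) = p + 1 := by field_simp; ring
  simp_rw [Q_rpow_mul_exp_neg hp]
  rw [integral_const_mul, integral_exp_mul_mul_one_add_exp_mul_rpow_neg (by linarith) hr, hcoef,
    cp_rpow_self hp]
  field_simp
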